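/- arXiv:2301.12721 — 2 statements merged into one kernel-verified Lean document; each statement's English description precedes it below -/
import Mathlib

section
/- Proposition 1 (SLOTAlign is invariant to feature permutation): Let the source graph G_s have adjacency matrix A_s ∈ ℝ^{n×n} and features X_s ∈ ℝ^{n×d_s}, let the target graph G_t have adjacency matrix A_t ∈ ℝ^{m×m} and features X_t ∈ ℝ^{m×d_t}, and let P ∈ {0,1}^{d_t×d_t} be a permutation matrix. Then the K structure bases of the feature-permuted target graph (A_t, X_t P) are equal to the K structure bases of (A_t, X_t); hence for every (π, β_s, β_t) ∈ C × Δ_K × Δ_K the SLOTAlign objective F built from G_s and (A_t, X_t P) equals the SLOTAlign objective built from G_s and G_t, and in particular the two problems min_{π∈C, β_s,β_t∈Δ_K} F have the same set of optimal solutions. -/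
open Matrix BigOperators

/-- A `d×d` permutation matrix: entries in `{0,1}` with exactly one `1` in
each row and each column. -/
def IsPermMatrix {d : ℕ} (P : Matrix (Fin d) (Fin d) ℝ) : Prop :=
  (∀ i j, P i j = 0 ∨ P i j = 1) ∧ (∀ i, ∃! j, P i j = 1) ∧ (∀ j, ∃! i, P i j = 1)

/-- The symmetric normalized adjacency matrix with self-loops:
`Â = M^{-1/2} (A + I) M^{-1/2}`, where `M` is the diagonal degree matrix of `A + I`. -/
noncomputable def normAdj {n : ℕ} (A : Matrix (Fin n) (Fin n) ℝ) :
    Matrix (Fin n) (Fin n) ℝ :=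
  Matrix.diagonal (fun i => (Real.sqrt (∑ j, (A + 1) i j))⁻¹) * (A + 1) *
    Matrix.diagonal (fun i => (Real.sqrt (∑ j, (A + 1) i j))⁻¹)

/-- The `q`-th candidate structure basis of an attributed graph `(A, X)`:
`D⁽¹⁾ = A` (edge-view), `D⁽²⁾ = XXᵀ` (node-view), and
`D⁽q⁾ = (Â^{q-2}X)(Â^{q-2}X)ᵀ` for `q > 2` (subgraph-view). -/
noncomputable def structBasis {n d : ℕ} (A : Matrix (Fin n) (Fin n) ℝ)
    (X : Matrix (Fin n) (Fin d) ℝ) (q : ℕ) : Matrix (Fin n) (Fin n) ℝ :=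
  if q = 1 then A
  else if q = 2 then X * Xᵀ
  else (normAdj A ^ (q - 2) * X) * (normAdj A ^ (q - 2) * X)ᵀ

/-- The probability simplex `Δ_K = {β ∈ ℝ^K : β_q ≥ 0, Σ_q β_q = 1}`. -/
def stdSimplex' (K : ℕ) : Set (Fin K → ℝ) :=
  {β | (∀ q, 0 ≤ β q) ∧ ∑ q, β q = 1}

/-- The transport polytope with uniform marginals:
`C = {π ≥ 0 : Σ_k π_{ik} = 1/n ∀i, Σ_i π_{ik} = 1/m ∀k}`. -/
def transportPolytope (n m : ℕ) : Set (Matrix (Fin n) (Fin m) ℝ) :=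
  {π | (∀ i k, 0 ≤ π i k) ∧ (∀ i, ∑ k, π i k = 1 / (n : ℝ)) ∧
    (∀ k, ∑ i, π i k = 1 / (m : ℝ))}

/-- The SLOTAlign objective
`F(π, βs, βt) = (1/n²) Σᵢⱼ (Σ_q βs_q Ds_q(i,j))² + (1/m²) Σₖₗ (Σ_q βt_q Dt_q(k,l))²
  − 2 tr((Σ_q βs_q Ds_q) π (Σ_q βt_q Dt_q) πᵀ)`. -/
noncomputable def slotF {n m K : ℕ} (Ds : Fin K → Matrix (Fin n) (Fin n) ℝ)
    (Dt : Fin K → Matrix (Fin m) (Fin m) ℝ) (π : Matrix (Fin n) (Fin m) ℝ)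
    (βs βt : Fin K → ℝ) : ℝ :=
  (1 / (n : ℝ) ^ 2) * ∑ i, ∑ j, (∑ q, βs q * Ds q i j) ^ 2
  + (1 / (m : ℝ) ^ 2) * ∑ k, ∑ l, (∑ q, βt q * Dt q k l) ^ 2
  - 2 * Matrix.trace ((∑ q, βs q • Ds q) * π * (∑ q, βt q • Dt q) * πᵀ)

lemma perm_mul_transpose {d : ℕ} (P : Matrix (Fin d) (Fin d) ℝ)
    (hP : IsPermMatrix P) : P * Pᵀ = 1 := by
  obtain ⟨h01, hrow, hcol⟩ := hP
  ext i k
  simp only [Matrix.mul_apply, Matrix.transpose_apply, Matrix.one_apply]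
  by_cases hik : i = k
  · subst hik
    obtain ⟨j0, hj0, huniq⟩ := hrow i
    simp only [if_pos rfl]
    rw [Finset.sum_eq_single j0]
    · rw [hj0]; simp
    · intro j _ hj
      rcases h01 i j with h | h
      · rw [h]; ring
      · exact absurd (huniq j h) hj
    · simp
  · rw [if_neg hik]
    apply Finset.sum_eq_zero
    intro j _
    rcases h01 i j with h | h
    · rw [h]; ring
    rcases h01 k j with h' | h'
    · rw [h']; ring
    exact absurd ((hcol j).unique h h') hik

lemma structBasis_perm {m dt : ℕ} (At : Matrix (Fin m) (Fin m) ℝ)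
    (Xt : Matrix (Fin m) (Fin dt) ℝ) (P : Matrix (Fin dt) (Fin dt) ℝ)
    (hP : IsPermMatrix P) (q : ℕ) :
    structBasis At (Xt * P) q = structBasis At Xt q := by
  have key : ∀ Y : Matrix (Fin m) (Fin dt) ℝ, (Y * P) * (Y * P)ᵀ = Y * Yᵀ := by
    intro Y
    rw [Matrix.transpose_mul, ← Matrix.mul_assoc, Matrix.mul_assoc Y P Pᵀ,
      perm_mul_transpose P hP, Matrix.mul_one]
  unfold structBasis
  split_ifs with h1 h2
  · rfl
  · exact key Xt
  · rw [← Matrix.mul_assoc]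
    exact key _

/-- **Proposition 1.** SLOTAlign is invariant to feature permutation:
the structure bases of the feature-permuted target `(A_t, X_t P)` coincide with those
of `(A_t, X_t)`, hence the SLOTAlign objective is unchanged on the feasible set, and
the two joint minimization problems have the same set of optimal solutions. -/
theorem slotalign_feature_permutation_invariant
    (n m ds dt K : ℕ) (hK : 3 ≤ K)
    (As : Matrix (Fin n) (Fin n) ℝ) (Xs : Matrix (Fin n) (Fin ds) ℝ)
    (At : Matrix (Fin m) (Fin m) ℝ) (Xt : Matrix (Fin m) (Fin dt) ℝ)
    (hAs : As.IsSymm) (hAt : At.IsSymm)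
    (hdegs : ∀ i, 0 < ∑ j, (As + 1) i j) (hdegt : ∀ i, 0 < ∑ j, (At + 1) i j)
    (P : Matrix (Fin dt) (Fin dt) ℝ) (hP : IsPermMatrix P) :
    (∀ q : Fin K,
        structBasis At (Xt * P) (q.val + 1) = structBasis At Xt (q.val + 1)) ∧
    (∀ (π : Matrix (Fin n) (Fin m) ℝ) (βs βt : Fin K → ℝ),
        π ∈ transportPolytope n m → βs ∈ stdSimplex' K → βt ∈ stdSimplex' K →
        slotF (fun q => structBasis As Xs (q.val + 1))
            (fun q => structBasis At (Xt * P) (q.val + 1)) π βs βt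
          = slotF (fun q => structBasis As Xs (q.val + 1))
            (fun q => structBasis At Xt (q.val + 1)) π βs βt) ∧
    ({x : Matrix (Fin n) (Fin m) ℝ × (Fin K → ℝ) × (Fin K → ℝ) |
        x.1 ∈ transportPolytope n m ∧ x.2.1 ∈ stdSimplex' K ∧ x.2.2 ∈ stdSimplex' K ∧
        ∀ y : Matrix (Fin n) (Fin m) ℝ × (Fin K → ℝ) × (Fin K → ℝ),
          y.1 ∈ transportPolytope n m → y.2.1 ∈ stdSimplex' K → y.2.2 ∈ stdSimplex' K →
          slotF (fun q => structBasis As Xs (q.val + 1))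
              (fun q => structBasis At (Xt * P) (q.val + 1)) x.1 x.2.1 x.2.2
            ≤ slotF (fun q => structBasis As Xs (q.val + 1))
              (fun q => structBasis At (Xt * P) (q.val + 1)) y.1 y.2.1 y.2.2}
      = {x : Matrix (Fin n) (Fin m) ℝ × (Fin K → ℝ) × (Fin K → ℝ) |
        x.1 ∈ transportPolytope n m ∧ x.2.1 ∈ stdSimplex' K ∧ x.2.2 ∈ stdSimplex' K ∧
        ∀ y : Matrix (Fin n) (Fin m) ℝ × (Fin K → ℝ) × (Fin K → ℝ),
          y.1 ∈ transportPolytope n m → y.2.1 ∈ stdSimplex' K → y.2.2 ∈ stdSimplex' K →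
          slotF (fun q => structBasis As Xs (q.val + 1))
              (fun q => structBasis At Xt (q.val + 1)) x.1 x.2.1 x.2.2
            ≤ slotF (fun q => structBasis As Xs (q.val + 1))
              (fun q => structBasis At Xt (q.val + 1)) y.1 y.2.1 y.2.2}) := by
  have hbases : (fun q : Fin K => structBasis At (Xt * P) (q.val + 1))
      = fun q : Fin K => structBasis At Xt (q.val + 1) := by
    funext q
    exact structBasis_perm At Xt P hP (q.val + 1)
  refine ⟨fun q => congrFun hbases q, ?_, ?_⟩
  · intro π βs βt _ _ _
    rw [hbases]
  · rw [hbases]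
end

section
/- Let f : ℝ^{n×m} → ℝ be differentiable with L-Lipschitz gradient with respect to the Frobenius norm, let C be a convex set of entrywise nonnegative n×m matrices each having total entry sum 1, let π ∈ C have all entries positive, and let 0 < η. If π⁺ ∈ C minimizes ρ ↦ ⟨∇f(π), ρ⟩ + (1/η)·KL(ρ‖π) over C, then f(π) − f(π⁺) ≥ (1/(2η) − L/2)·‖π⁺ − π‖_F². In particular, if 0 < η < 1/L then the KL-proximal (entropic mirror) update strictly decreases f unless π⁺ = π. -/
/-!
Evaluating the minimality of `π⁺` at `ρ = π`, where `KL(π‖π) = 0`, gives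
`⟪∇f(π), π⁺ - π⟫ ≤ -(1/η) KL(π⁺‖π)`. Each summand `a log(a/b) - a + b` of `KL(π⁺‖π)` is the
Bregman divergence of `t ↦ t log t` between `a` and `b`; since `t log t - t²/2` is still convex
on `[0, 1]`, where all entries of a coupling lie, it is at least `(a - b)²/2`. The descent lemma
`f(π⁺) ≤ f(π) + ⟪∇f(π), π⁺ - π⟫ + (L/2)‖π⁺ - π‖²` closes the argument; it holds because
`t ↦ f(π + t(π⁺ - π))` minus its quadratic majorant has nonpositive derivative on `[0, 1]`.
-/

open scoped RealInnerProductSpace BigOperators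

/-- The Kullback–Leibler divergence between two `n×m` arrays (viewed as elements of
Euclidean space with the Frobenius norm):
`KL(P‖Q) = Σ_p (P_p log(P_p/Q_p) − P_p + Q_p)` (with the convention `0·log 0 = 0`,
automatic since `Real.log 0 = 0`). -/
noncomputable def vecKL {ι : Type*} [Fintype ι] (P Q : ι → ℝ) : ℝ :=
  ∑ p, (P p * Real.log (P p / Q p) - P p + Q p)

section

open Real Set

theorem ConvexOn.add_mul_sub_le_of_hasDerivAt {S : Set ℝ} {φ : ℝ → ℝ} {φ' a b : ℝ}
    (hφ : ConvexOn ℝ S φ) (ha : a ∈ S) (hb : b ∈ S) (hφ' : HasDerivAt φ φ' b) :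
    φ b + φ' * (a - b) ≤ φ a := by
  rcases lt_trichotomy a b with hab | rfl | hab
  · have := hφ.slope_le_of_hasDerivAt ha hb hab hφ'
    rw [slope_def_field, div_le_iff₀ (sub_pos.2 hab)] at this
    linarith
  · simp
  · have := hφ.le_slope_of_hasDerivAt hb ha hab hφ'
    rw [slope_def_field, le_div_iff₀ (sub_pos.2 hab)] at this
    linarith

theorem hasDerivAt_mul_log_sub_sq_div_two {t : ℝ} (ht : t ≠ 0) :
    HasDerivAt (fun t ↦ t * log t - t ^ 2 / 2) (log t + 1 - t) t :=
  ((hasDerivAt_mul_log ht).sub ((hasDerivAt_pow 2 t).div_const 2)).congr_deriv (by ring)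

theorem convexOn_mul_log_sub_sq_div_two :
    ConvexOn ℝ (Icc 0 1) (fun t : ℝ ↦ t * log t - t ^ 2 / 2) := by
  refine convexOn_of_hasDerivWithinAt2_nonneg (convex_Icc 0 1)
    (f' := fun t ↦ log t + 1 - t) (f'' := fun t ↦ t⁻¹ - 1) (by fun_prop) ?_ ?_ ?_ <;>
    simp only [interior_Icc, mem_Ioo] <;> rintro t ⟨ht₀, ht₁⟩
  · exact (hasDerivAt_mul_log_sub_sq_div_two ht₀.ne').hasDerivWithinAt
  · exact (((hasDerivAt_log ht₀.ne').add_const 1).sub (hasDerivAt_id t)).hasDerivWithinAt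
  · linarith [one_le_inv_iff₀.2 ⟨ht₀, ht₁.le⟩]

theorem sq_sub_div_two_le_mul_log_div_sub_add {a b : ℝ} (ha : a ∈ Icc (0 : ℝ) 1)
    (hb : b ∈ Ioc (0 : ℝ) 1) :
    (a - b) ^ 2 / 2 ≤ a * log (a / b) - a + b := by
  have hb₀ : b ≠ 0 := hb.1.ne'
  have tangent := convexOn_mul_log_sub_sq_div_two.add_mul_sub_le_of_hasDerivAt ha
    (Ioc_subset_Icc_self hb) (hasDerivAt_mul_log_sub_sq_div_two hb₀)
  have hlog : a * log (a / b) = a * log a - a * log b := by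
    rcases eq_or_ne a 0 with rfl | ha₀
    · simp
    · rw [log_div ha₀ hb₀, mul_sub]
  linarith

theorem vecKL_self {ι : Type*} [Fintype ι] (Q : ι → ℝ) : vecKL Q Q = 0 := by
  simp [vecKL]

theorem sq_norm_sub_div_two_le_vecKL {ι : Type*} [Fintype ι] {P Q : EuclideanSpace ℝ ι}
    (hP : ∀ p, P p ∈ Icc (0 : ℝ) 1) (hQ : ∀ p, Q p ∈ Ioc (0 : ℝ) 1) :
    ‖P - Q‖ ^ 2 / 2 ≤ vecKL P Q := by
  rw [EuclideanSpace.norm_sq_eq, Finset.sum_div]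
  exact Finset.sum_le_sum fun p _ ↦ by
    simpa using sq_sub_div_two_le_mul_log_div_sub_add (hP p) (hQ p)

theorem apply_mem_Icc_of_sum_eq_one {ι : Type*} [Fintype ι] {P : ι → ℝ} (hP : ∀ p, 0 ≤ P p)
    (hsum : ∑ p, P p = 1) (p : ι) : P p ∈ Icc (0 : ℝ) 1 :=
  ⟨hP p, hsum ▸ Finset.single_le_sum (fun q _ ↦ hP q) (Finset.mem_univ p)⟩

theorem Differentiable.apply_le_add_inner_gradient_add_sq_norm {E : Type*}
    [NormedAddCommGroup E] [InnerProductSpace ℝ E] [CompleteSpace E] {f : E → ℝ} {L : ℝ}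
    (hf : Differentiable ℝ f) (hlip : ∀ x y, ‖gradient f x - gradient f y‖ ≤ L * ‖x - y‖)
    (x y : E) :
    f y ≤ f x + ⟪gradient f x, y - x⟫ + L / 2 * ‖y - x‖ ^ 2 := by
  set v := y - x
  set g : ℝ → ℝ := fun t ↦ f (x + t • v) - t * ⟪gradient f x, v⟫ - L / 2 * t ^ 2 * ‖v‖ ^ 2
  have hg (t : ℝ) : HasDerivAt g
      (⟪gradient f (x + t • v) - gradient f x, v⟫ - L * t * ‖v‖ ^ 2) t := by
    have hline : HasDerivAt (fun s : ℝ ↦ x + s • v) v t := by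
      simpa using ((hasDerivAt_id t).smul_const v).const_add x
    have hfline := (hf (x + t • v)).hasGradientAt.hasFDerivAt.comp_hasDerivAt t hline
    refine ((hfline.sub ((hasDerivAt_id t).mul_const _)).sub
      (((hasDerivAt_pow 2 t).const_mul (L / 2)).mul_const _)).congr_deriv ?_
    simp only [InnerProductSpace.toDual_apply_apply, inner_sub_left]
    ring
  have hanti : AntitoneOn g (Icc 0 1) := by
    have hg_cont : Continuous g := continuous_iff_continuousAt.2 fun t ↦ (hg t).continuousAt
    refine antitoneOn_of_hasDerivWithinAt_nonpos (convex_Icc 0 1) hg_cont.continuousOn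
      (fun t _ ↦ (hg t).hasDerivWithinAt) ?_
    simp only [interior_Icc, mem_Ioo]
    rintro t ⟨ht₀, -⟩
    rw [sub_nonpos]
    calc ⟪gradient f (x + t • v) - gradient f x, v⟫
        ≤ ‖gradient f (x + t • v) - gradient f x‖ * ‖v‖ := real_inner_le_norm _ _
      _ ≤ L * ‖t • v‖ * ‖v‖ := by
        gcongr
        simpa using hlip (x + t • v) x
      _ = L * t * ‖v‖ ^ 2 := by rw [norm_smul, norm_of_nonneg ht₀.le]; ring
  have := hanti (left_mem_Icc.2 zero_le_one) (right_mem_Icc.2 zero_le_one) zero_le_one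
  have hxv : x + v = y := add_sub_cancel x y
  simp only [g, one_smul, zero_smul, add_zero, hxv] at this
  linarith

end

theorem kl_prox_sufficient_decrease_general (n m : ℕ)
    (f : EuclideanSpace ℝ (Fin n × Fin m) → ℝ) (L : ℝ)
    (hdiff : Differentiable ℝ f)
    (hlip : ∀ x y, ‖gradient f x - gradient f y‖ ≤ L * ‖x - y‖)
    (C : Set (EuclideanSpace ℝ (Fin n × Fin m)))
    (hC : ∀ ρ ∈ C, (∀ p, 0 ≤ ρ p) ∧ ∑ p, ρ p = 1)
    (π πplus : EuclideanSpace ℝ (Fin n × Fin m))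
    (hπ : π ∈ C) (hπpos : ∀ p, 0 < π p)
    (η : ℝ) (hη : 0 < η) (hmem : πplus ∈ C)
    (hmin : ∀ ρ ∈ C,
      ⟪gradient f π, πplus⟫ + (1 / η) * vecKL πplus π
        ≤ ⟪gradient f π, ρ⟫ + (1 / η) * vecKL ρ π) :
    f π - f πplus ≥ (1 / (2 * η) - L / 2) * ‖πplus - π‖ ^ 2 ∧
    (η < 1 / L → πplus ≠ π → f πplus < f π) := by
  have hmin_at_π := hmin π hπ
  rw [vecKL_self, mul_zero, add_zero] at hmin_at_π
  have hKL : ‖πplus - π‖ ^ 2 / 2 ≤ vecKL πplus π := by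
    obtain ⟨hπ₀, hπ₁⟩ := hC π hπ
    obtain ⟨hπplus₀, hπplus₁⟩ := hC πplus hmem
    exact sq_norm_sub_div_two_le_vecKL (apply_mem_Icc_of_sum_eq_one hπplus₀ hπplus₁)
      fun p ↦ ⟨hπpos p, (apply_mem_Icc_of_sum_eq_one hπ₀ hπ₁ p).2⟩
  have hdescent := hdiff.apply_le_add_inner_gradient_add_sq_norm hlip π πplus
  have hdecrease : f π - f πplus ≥ (1 / (2 * η) - L / 2) * ‖πplus - π‖ ^ 2 := by
    rw [inner_sub_right] at hdescent
    calc (1 / (2 * η) - L / 2) * ‖πplus - π‖ ^ 2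
        = 1 / η * (‖πplus - π‖ ^ 2 / 2) - L / 2 * ‖πplus - π‖ ^ 2 := by ring
      _ ≤ 1 / η * vecKL πplus π - L / 2 * ‖πplus - π‖ ^ 2 := by gcongr
      _ ≤ f π - f πplus := by linarith
  refine ⟨hdecrease, fun hηL hne ↦ ?_⟩
  have hL : 0 < L := one_div_pos.1 (hη.trans hηL)
  have hcoeff : 0 < 1 / (2 * η) - L / 2 := by
    rw [lt_one_div hη hL] at hηL
    linarith [show 1 / (2 * η) = 1 / η / 2 by ring]
  have hgap : 0 < ‖πplus - π‖ ^ 2 := by positivity [sub_ne_zero.2 hne]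
  linarith [mul_pos hcoeff hgap]

/-- Sufficient decrease of the KL-proximal (entropic mirror) update:
if `f` is differentiable with `L`-Lipschitz gradient (Frobenius norm), `C` is a convex
set of entrywise nonnegative `n×m` matrices of unit total mass, `π ∈ C` is entrywise
positive, and `π⁺ ∈ C` minimizes `ρ ↦ ⟨∇f(π), ρ⟩ + (1/η)·KL(ρ‖π)` over `C`, then
`f(π) − f(π⁺) ≥ (1/(2η) − L/2)‖π⁺ − π‖_F²`; in particular, if `0 < η < 1/L` the
update strictly decreases `f` unless `π⁺ = π`. -/
theorem kl_prox_sufficient_decrease (n m : ℕ)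
    (f : EuclideanSpace ℝ (Fin n × Fin m) → ℝ) (L : ℝ) (hL : 0 < L)
    (hdiff : Differentiable ℝ f)
    (hlip : ∀ x y, ‖gradient f x - gradient f y‖ ≤ L * ‖x - y‖)
    (C : Set (EuclideanSpace ℝ (Fin n × Fin m))) (hconv : Convex ℝ C)
    (hC : ∀ ρ ∈ C, (∀ p, 0 ≤ ρ p) ∧ ∑ p, ρ p = 1)
    (π πplus : EuclideanSpace ℝ (Fin n × Fin m))
    (hπ : π ∈ C) (hπpos : ∀ p, 0 < π p)
    (η : ℝ) (hη : 0 < η) (hmem : πplus ∈ C)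
    (hmin : ∀ ρ ∈ C,
      ⟪gradient f π, πplus⟫ + (1 / η) * vecKL πplus π
        ≤ ⟪gradient f π, ρ⟫ + (1 / η) * vecKL ρ π) :
    f π - f πplus ≥ (1 / (2 * η) - L / 2) * ‖πplus - π‖ ^ 2 ∧
    (η < 1 / L → πplus ≠ π → f πplus < f π) :=
  kl_prox_sufficient_decrease_general n m f L hdiff hlip C hC π πplus hπ hπpos η hη hmem hmin
end
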